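/- Let M be an n×n complex matrix and fix a proper nonempty subset S of indices and a vertex v ∉ S in an intermediate subset T with S ⊆ T ⊆ {1,…,n}. Then reducing M first over T and then over S gives the same result as reducing M directly over S: R_S(R_T(M))(λ) = R_S(M)(λ) for all λ where both sides are defined (i.e., λ not an eigenvalue of the relevant complement submatrices). -/

import Mathlib

/-!
With `L = M - λ • 1`, the isospectral reduction over `p` is `λ • 1` plus the Schur complement of
the block of `L` on the complement of `p`. The claim is then the Crabtree–Haynsworth quotient
formula for Schur complements: split the complement of `S` into `T \ S` and the complement of `T`,
invert the corresponding `2 × 2` block matrix through the Schur complement of its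
complement-of-`T` corner, and compare blocks.
-/

open Matrix

/-- The isospectral reduction of a square matrix over the indices satisfying `p`,
evaluated at `λ`. -/
noncomputable def isoReduction {m : Type*} [Fintype m] [DecidableEq m]
    (M : Matrix m m ℂ) (p : m → Prop) [DecidablePred p] (lam : ℂ) :
    Matrix {i // p i} {i // p i} ℂ :=
  M.toBlock p p -
    M.toBlock p (fun i => ¬ p i) *
      (M.toBlock (fun i => ¬ p i) (fun i => ¬ p i) - lam • 1)⁻¹ *
        M.toBlock (fun i => ¬ p i) p

theorem fromCols_mul_inv_fromBlocks_mul_fromRows {R l l' u w : Type*} [CommRing R]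
    [Fintype u] [DecidableEq u] [Fintype w] [DecidableEq w]
    (B : Matrix l u R) (C : Matrix l w R) (D : Matrix u l' R) (G : Matrix w l' R)
    (E : Matrix u u R) (F : Matrix u w R) (H : Matrix w u R) (K : Matrix w w R)
    (hK : IsUnit K.det) (hS : IsUnit (E - F * K⁻¹ * H).det) :
    fromCols B C * (fromBlocks E F H K)⁻¹ * fromRows D G =
      C * K⁻¹ * G + (B - C * K⁻¹ * H) * (E - F * K⁻¹ * H)⁻¹ * (D - F * K⁻¹ * G) := by
  let := K.invertibleOfIsUnitDet hK
  let := (E - F * ⅟K * H).invertibleOfIsUnitDet (by rwa [invOf_eq_nonsing_inv])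
  let := fromBlocks₂₂Invertible E F H K
  rw [← invOf_eq_nonsing_inv (fromBlocks E F H K), invOf_fromBlocks₂₂_eq,
    fromCols_mul_fromBlocks, fromCols_mul_fromRows]
  simp only [invOf_eq_nonsing_inv, Matrix.mul_sub, Matrix.sub_mul, Matrix.mul_add,
    Matrix.add_mul, Matrix.mul_neg, Matrix.neg_mul, Matrix.mul_assoc]
  abel

theorem submatrix_mul_inv_submatrix_mul_submatrix {R l l' n o : Type*} [CommRing R]
    [Fintype n] [DecidableEq n] [Fintype o] [DecidableEq o]
    (X : Matrix l n R) (N : Matrix n n R) (Y : Matrix n l' R) (σ : o ≃ n) :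
    X.submatrix id σ * (N.submatrix σ σ)⁻¹ * Y.submatrix σ id = X * N⁻¹ * Y := by
  rw [inv_submatrix_equiv, submatrix_mul_equiv, submatrix_mul_equiv, submatrix_id_id]

theorem toBlock_sub_smul_one {α m : Type*} [Ring α] [DecidableEq m] (M : Matrix m m α) (c : α)
    (a b : m → Prop) :
    (M - c • 1).toBlock a b = M.toBlock a b - c • (1 : Matrix m m α).toBlock a b :=
  rfl

def complSplitEquiv {m : Type*} (p q : m → Prop) [DecidablePred q] (hpq : ∀ i, p i → q i) :
    {x : {i // q i} // ¬ p x} ⊕ {i // ¬ q i} ≃ {i // ¬ p i} where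
  toFun := Sum.elim (fun u => ⟨u.1, u.2⟩) (fun w => ⟨w.1, fun hp => w.2 (hpq _ hp)⟩)
  invFun i := if h : q i then .inl ⟨⟨i, h⟩, i.2⟩ else .inr ⟨i, h⟩
  left_inv := by rintro (⟨⟨i, hq⟩, hp⟩ | ⟨i, hq⟩) <;> simp [hq]
  right_inv i := by by_cases h : q i <;> simp [h]

section SchurComplement

variable {R m : Type*} [CommRing R] [Fintype m] [DecidableEq m]

noncomputable def schurCompl (L : Matrix m m R) (p : m → Prop) [DecidablePred p] :
    Matrix {i // p i} {i // p i} R :=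
  L.toBlock p p - L.toBlock p (fun i => ¬ p i) *
    (L.toBlock (fun i => ¬ p i) (fun i => ¬ p i))⁻¹ * L.toBlock (fun i => ¬ p i) p

theorem schurCompl_submatrix {α β : Type*} (L : Matrix m m R) (p : m → Prop) [DecidablePred p]
    (f : α → {i // p i}) (g : β → {i // p i}) :
    (schurCompl L p).submatrix f g =
      (L.toBlock p p).submatrix f g - (L.toBlock p (fun i => ¬ p i)).submatrix f id *
        (L.toBlock (fun i => ¬ p i) (fun i => ¬ p i))⁻¹ *
          (L.toBlock (fun i => ¬ p i) p).submatrix id g :=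
  rfl

theorem schurCompl_schurCompl (L : Matrix m m R) (p q : m → Prop) [DecidablePred p]
    [DecidablePred q] (hpq : ∀ i, p i → q i)
    (hK : IsUnit (L.toBlock (fun i => ¬ q i) (fun i => ¬ q i)).det)
    (hS : IsUnit ((schurCompl L q).toBlock (fun x => ¬ p x) (fun x => ¬ p x)).det) :
    schurCompl (schurCompl L q) (fun x => p x) =
      (schurCompl L p).submatrix (Equiv.subtypeSubtypeEquivSubtype (hpq _))
        (Equiv.subtypeSubtypeEquivSubtype (hpq _)) := by
  set σ := complSplitEquiv p q hpq
  rw [schurCompl_submatrix, ← submatrix_mul_inv_submatrix_mul_submatrix _ _ _ σ,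
    ← fromCols_toCols (Matrix.submatrix _ id σ), ← fromRows_toRows (Matrix.submatrix _ σ id),
    ← fromBlocks_toBlocks (Matrix.submatrix _ σ σ),
    fromCols_mul_inv_fromBlocks_mul_fromRows, ← sub_sub]
  -- every block on the right is definitionally the corresponding block on the left
  · rfl
  · exact hK
  · exact hS

end SchurComplement

section IsoReduction

variable {m : Type*} [Fintype m] [DecidableEq m] (M : Matrix m m ℂ) (lam : ℂ)

theorem isoReduction_eq_schurCompl_add (p : m → Prop) [DecidablePred p] :
    isoReduction M p lam = schurCompl (M - lam • 1) p + lam • 1 := by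
  have hp : Disjoint p (fun i => ¬ p i) := disjoint_compl_right
  simp only [isoReduction, schurCompl, toBlock_sub_smul_one, toBlock_one_self,
    toBlock_one_disjoint hp, toBlock_one_disjoint hp.symm, smul_zero, sub_zero]
  abel

theorem isoReduction_isoReduction (p q : m → Prop) [DecidablePred p] [DecidablePred q]
    (hpq : ∀ i, p i → q i)
    (hK : (M.toBlock (fun i => ¬ q i) (fun i => ¬ q i) - lam • 1).det ≠ 0)
    (hS : ((isoReduction M q lam).toBlock (fun x => ¬ p x) (fun x => ¬ p x) - lam • 1).det ≠ 0) :
    isoReduction (isoReduction M q lam) (fun x => p x) lam =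
      (isoReduction M p lam).submatrix (Equiv.subtypeSubtypeEquivSubtype (hpq _))
        (Equiv.subtypeSubtypeEquivSubtype (hpq _)) := by
  have hK' : IsUnit ((M - lam • 1).toBlock (fun i => ¬ q i) (fun i => ¬ q i)).det := by
    rwa [toBlock_sub_smul_one, toBlock_one_self, isUnit_iff_ne_zero]
  have hS' :
      IsUnit ((schurCompl (M - lam • 1) q).toBlock (fun x => ¬ p x) (fun x => ¬ p x)).det := by
    rwa [← add_sub_cancel_right (schurCompl (M - lam • 1) q) (lam • 1),
      ← isoReduction_eq_schurCompl_add, toBlock_sub_smul_one, toBlock_one_self,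
      isUnit_iff_ne_zero]
  rw [isoReduction_eq_schurCompl_add (isoReduction M q lam), isoReduction_eq_schurCompl_add M,
    add_sub_cancel_right, schurCompl_schurCompl _ _ _ hpq hK' hS', isoReduction_eq_schurCompl_add,
    submatrix_add, Pi.add_apply, Pi.add_apply, submatrix_smul, Pi.smul_apply, Pi.smul_apply,
    submatrix_one_equiv]

end IsoReduction

theorem isoReduction_sequential_general {n : ℕ} (M : Matrix (Fin n) (Fin n) ℂ)
    (S T : Finset (Fin n)) (hST : S ⊆ T) (lam : ℂ)
    (h1 : (M.toBlock (fun i => ¬ i ∈ T) (fun i => ¬ i ∈ T) - lam • 1).det ≠ 0)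
    (h3 : (((isoReduction M (fun i => i ∈ T) lam).toBlock
        (fun i => ¬ (i.val ∈ S)) (fun i => ¬ (i.val ∈ S))) - lam • 1).det ≠ 0) :
    ∀ (i j : Fin n) (hi : i ∈ S) (hj : j ∈ S),
      isoReduction (isoReduction M (fun i => i ∈ T) lam) (fun x => x.val ∈ S) lam
          ⟨⟨i, hST hi⟩, hi⟩ ⟨⟨j, hST hj⟩, hj⟩
        = isoReduction M (fun i => i ∈ S) lam ⟨i, hi⟩ ⟨j, hj⟩ := by
  intro i j hi hj
  -- `{i // i ∈ T}` carries the `Finset` instance here but `Subtype.fintype` in the lemmas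
  have hT : Finset.Subtype.fintype T = Subtype.fintype (· ∈ T) := Subsingleton.elim _ _
  rw [hT] at h3 ⊢
  rw [isoReduction_isoReduction M lam (· ∈ S) (· ∈ T) (fun _ h => hST h) h1 h3]
  rfl

/-- Uniqueness of sequential isospectral reductions: for `S ⊆ T`, reducing `M` first over
`T` and then over `S` (at the same `λ`) gives the same result as reducing directly over
`S`, entrywise, whenever both sides are defined. -/
theorem isoReduction_sequential {n : ℕ} (M : Matrix (Fin n) (Fin n) ℂ)
    (S T : Finset (Fin n)) (hS : S.Nonempty) (hST : S ⊆ T)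
    (v : Fin n) (hvT : v ∈ T) (hvS : v ∉ S) (lam : ℂ)
    (h1 : (M.toBlock (fun i => ¬ i ∈ T) (fun i => ¬ i ∈ T) - lam • 1).det ≠ 0)
    (h2 : (M.toBlock (fun i => ¬ i ∈ S) (fun i => ¬ i ∈ S) - lam • 1).det ≠ 0)
    (h3 : (((isoReduction M (fun i => i ∈ T) lam).toBlock
        (fun i => ¬ (i.val ∈ S)) (fun i => ¬ (i.val ∈ S))) - lam • 1).det ≠ 0) :
    ∀ (i j : Fin n) (hi : i ∈ S) (hj : j ∈ S),
      isoReduction (isoReduction M (fun i => i ∈ T) lam) (fun x => x.val ∈ S) lam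
          ⟨⟨i, hST hi⟩, hi⟩ ⟨⟨j, hST hj⟩, hj⟩
        = isoReduction M (fun i => i ∈ S) lam ⟨i, hi⟩ ⟨j, hj⟩ :=
  isoReduction_sequential_general M S T hST lam h1 h3
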